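/- arXiv:2108.09046 — 2 statements merged into one kernel-verified Lean document; each statement's English description precedes it below -/
import Mathlib

section
/- For every R > 0, sup_{x∈[0,R]} |S_n(x) − √(2x+1)| → 0 and sup_{x∈[0,R]} |S_n'(x) − 1/√(2x+1)| → 0 as n → ∞; in particular, for every 𝔠 ≥ 0, lim_{n→∞} S_n(𝔠) = √(2𝔠+1). -/
/-!
Splitting off the largest variable of the simplex gives
`G^{+,m}_{i+1}(x) = ∫_0^x (1 + G_{m+i})^{-2} G^{+,m}_i`, and these recursions telescope into
`S_{n+2}(x) = 1 + ∫_0^x (1 + G_{n+2})^{-2} S_{n+1}`. By induction `S_{n+1} = 1 + G_{n+2}` on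
`[0, ∞)`, so `S_{n+2}' = 1 / (1 + G_{n+2})`: the functions `1 + G_{k+2}` are the Picard iterates,
started at `1`, of `u' = 1 / u`, `u(0) = 1`, whose solution is `√(2x + 1)`. As `t ↦ 1 / t` is
1-Lipschitz on `[1, ∞)`, the error `e_k = |1 + G_{k+2} - √(2x + 1)|` satisfies
`e_{k+1}(x) ≤ ∫_0^x e_k` and `e_0(x) ≤ x`, so `e_k(x) ≤ x^{k+1} / (k+1)!`, uniformly small on
`[0, R]`.
-/

/-- The functions `G_j` from the paper: `G_2 ≡ 0` and, for `j ≥ 3`,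
`G_j(x) = ∫_0^x dy / (1 + G_{j-1}(y))`. (Values for `j = 0, 1` are irrelevant.) -/
noncomputable def G : ℕ → ℝ → ℝ
  | 0, _ => 0
  | 1, _ => 0
  | 2, _ => 0
  | j + 3, x => ∫ y in (0:ℝ)..x, 1 / (1 + G (j + 2) y)

/-- `G^{+,m}_i(x) = ∫_{Δ_x^i} ∏_{ℓ=0}^{i-1} (1 + G_{m+ℓ}(x_ℓ))^{-2} dx_0 ⋯ dx_{i-1}`,
the integral over the simplex `{0 ≤ x_0 ≤ ⋯ ≤ x_{i-1} ≤ x}`; for `i = 0` it equals `1`. -/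
noncomputable def Gplus (m i : ℕ) (x : ℝ) : ℝ :=
  ∫ v : Fin i → ℝ,
    Set.indicator {v : Fin i → ℝ | Monotone v ∧ ∀ l, v l ∈ Set.Icc 0 x}
      (fun v => ∏ l : Fin i, ((1 + G (m + (l : ℕ)) (v l)) ^ 2)⁻¹) v

/-- `S_n(x) = Σ_{j=1}^n G^{+,n+2-j}_{j-1}(x)`. -/
noncomputable def S (n : ℕ) (x : ℝ) : ℝ :=
  ∑ j ∈ Finset.Icc 1 n, Gplus (n + 2 - j) (j - 1) x

open MeasureTheory Set Filter Topology
open scoped Nat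

theorem ContinuousOn.hasDerivWithinAt_integral_Ici {E : Type*} [NormedAddCommGroup E]
    [NormedSpace ℝ E] [CompleteSpace E] {f : ℝ → E} {a x : ℝ} (hf : ContinuousOn f (Ici a))
    (hx : a ≤ x) : HasDerivWithinAt (fun t => ∫ y in a..t, f y) (f x) (Ici a) x := by
  have hg : Continuous fun y => f (max y a) :=
    hf.comp_continuous (continuous_id.max continuous_const) fun y => le_max_right y a
  have hderiv := (hg.integral_hasStrictDerivAt a x).hasDerivAt.hasDerivWithinAt (s := Ici a)
  have heq : EqOn (fun t => ∫ y in a..t, f y) (fun t => ∫ y in a..t, f (max y a)) (Ici a) :=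
    fun t ht => intervalIntegral.integral_congr fun y hy => by
      rw [uIcc_of_le ht] at hy
      simp only [max_eq_left hy.1]
  rw [max_eq_left hx] at hderiv
  exact hderiv.congr heq (heq hx)

theorem abs_inv_sub_inv_le_abs_sub {a b : ℝ} (ha : 1 ≤ a) (hb : 1 ≤ b) :
    |a⁻¹ - b⁻¹| ≤ |a - b| := by
  rw [inv_sub_inv (by positivity) (by positivity), abs_div, abs_sub_comm,
    abs_of_pos (by positivity : 0 < a * b)]
  exact div_le_self (abs_nonneg _) (one_le_mul_of_one_le_of_one_le ha hb)

theorem tendstoUniformlyOn_of_dist_le {ι α β : Type*} [PseudoMetricSpace β] {l : Filter ι}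
    {F : ι → α → β} {f : α → β} {s : Set α} {b : ι → ℝ} (hb : Tendsto b l (𝓝 0))
    (h : ∀ᶠ n in l, ∀ x ∈ s, dist (f x) (F n x) ≤ b n) : TendstoUniformlyOn F f l s := by
  refine Metric.tendstoUniformlyOn_iff.2 fun ε hε => ?_
  filter_upwards [h, hb (Iio_mem_nhds hε)] with n hn hbn x hx
  exact (hn x hx).trans_lt hbn

theorem integral_fin_succ_eq_integral_snoc {α E : Type*} [MeasureSpace α]
    [SigmaFinite (volume : Measure α)] [NormedAddCommGroup E] [NormedSpace ℝ E] {n : ℕ}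
    {F : (Fin (n + 1) → α) → E} (hF : Integrable F) :
    ∫ v, F v = ∫ y, ∫ w : Fin n → α, F (Fin.snoc w y) := by
  have he := (volume_preserving_piFinSuccAbove (fun _ : Fin (n + 1) => α) (Fin.last n)).symm
  rw [← he.integral_comp', Measure.volume_eq_prod, integral_prod]
  · simp [MeasurableEquiv.piFinSuccAbove_symm_apply, Fin.insertNthEquiv, Fin.insertNth_last']
  · exact (he.integrable_comp_emb (MeasurableEquiv.measurableEmbedding _)).2 hF

theorem sqrt_two_mul_add_one_sub_one_eq_integral {x : ℝ} (hx : -(1 / 2) < x) :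
    √(2 * x + 1) - 1 = ∫ y in (0 : ℝ)..x, (√(2 * y + 1))⁻¹ := by
  have hpos : ∀ y ∈ uIcc 0 x, 0 < 2 * y + 1 := fun y hy => by
    linarith [lt_min (by norm_num : -(1 / 2 : ℝ) < 0) hx, hy.1]
  have hderiv : ∀ y ∈ uIcc 0 x, HasDerivAt (fun t => √(2 * t + 1)) (√(2 * y + 1))⁻¹ y := by
    intro y hy
    have := ((hasDerivAt_id y).const_mul 2 |>.add_const 1).sqrt (hpos y hy).ne'
    convert this using 1
    · rfl
    · rw [id, mul_div_mul_left _ _ two_ne_zero, one_div]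
  have hcont : ContinuousOn (fun y => (√(2 * y + 1))⁻¹) (uIcc 0 x) :=
    ContinuousOn.inv₀ (by fun_prop) fun y hy => (Real.sqrt_pos.2 (hpos y hy)).ne'
  rw [intervalIntegral.integral_eq_sub_of_hasDerivAt hderiv hcont.intervalIntegrable]
  norm_num

theorem Fin.monotone_snoc_iff {α : Type*} [Preorder α] {n : ℕ} {w : Fin n → α} {t : α} :
    Monotone (Fin.snoc w t : Fin (n + 1) → α) ↔ Monotone w ∧ ∀ l, w l ≤ t := by
  refine ⟨fun h => ⟨fun a b hab => ?_, fun l => ?_⟩, fun ⟨hw, hle⟩ a b hab => ?_⟩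
  · simpa using h (Fin.castSucc_le_castSucc_iff.2 hab)
  · simpa using h (Fin.le_last l.castSucc)
  · induction b using Fin.lastCases with
    | last =>
      induction a using Fin.lastCases with
      | last => exact le_rfl
      | cast a => simpa using hle a
    | cast b =>
      induction a using Fin.lastCases with
      | last => exact absurd hab (Fin.castSucc_lt_last b).not_ge
      | cast a => simpa using hw (Fin.castSucc_le_castSucc_iff.1 hab)

def simplex (n : ℕ) (x : ℝ) : Set (Fin n → ℝ) := {v | Monotone v ∧ ∀ l, v l ∈ Icc 0 x}

theorem isCompact_simplex (n : ℕ) (x : ℝ) : IsCompact (simplex n x) := by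
  have : simplex n x = {v | Monotone v} ∩ Icc 0 (fun _ => x) := by
    ext v
    simp [simplex, Pi.le_def, forall_and]
  rw [this]
  exact isCompact_Icc.inter_left isClosed_monotone

theorem snoc_mem_simplex_iff {n : ℕ} {x t : ℝ} {w : Fin n → ℝ} :
    Fin.snoc w t ∈ simplex (n + 1) x ↔ t ∈ Icc 0 x ∧ w ∈ simplex n t := by
  simp only [simplex, mem_ofPred_eq, Fin.monotone_snoc_iff, Fin.forall_fin_succ', Fin.snoc_castSucc,
    Fin.snoc_last, mem_Icc]
  constructor
  · rintro ⟨⟨hw, hle⟩, hmem, ht⟩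
    exact ⟨ht, hw, fun l => ⟨(hmem l).1, hle l⟩⟩
  · rintro ⟨ht, hw, hmem⟩
    exact ⟨⟨hw, fun l => (hmem l).2⟩, fun l => ⟨(hmem l).1, (hmem l).2.trans ht.2⟩, ht⟩

noncomputable def simplexIntegral (f : ℕ → ℝ → ℝ) (n : ℕ) (x : ℝ) : ℝ :=
  ∫ v : Fin n → ℝ, (simplex n x).indicator (fun v => ∏ l : Fin n, f l (v l)) v

@[simp]
theorem simplexIntegral_zero (f : ℕ → ℝ → ℝ) (x : ℝ) : simplexIntegral f 0 x = 1 := by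
  have : simplex 0 x = univ := eq_univ_of_forall fun v => ⟨Subsingleton.monotone v, finZeroElim⟩
  simp [simplexIntegral, this, volume_pi, Measure.real]

section

variable {f : ℕ → ℝ → ℝ}

theorem integrable_indicator_simplex (hf : ∀ l, ContinuousOn (f l) (Ici 0)) (n : ℕ) (x : ℝ) :
    Integrable ((simplex n x).indicator fun v => ∏ l : Fin n, f l (v l)) :=
  (integrable_indicator_iff (isCompact_simplex n x).isClosed.measurableSet).2 <|
    ContinuousOn.integrableOn_compact (isCompact_simplex n x) <|
      continuousOn_finsetProd _ fun l _ =>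
        (hf l).comp (continuous_apply l).continuousOn fun _ hv => (hv.2 l).1

theorem simplexIntegral_succ (hf : ∀ l, ContinuousOn (f l) (Ici 0)) (n : ℕ) {x : ℝ} (hx : 0 ≤ x) :
    simplexIntegral f (n + 1) x = ∫ y in (0 : ℝ)..x, f n y * simplexIntegral f n y := by
  have hsnoc : ∀ y ∈ Icc 0 x, ∀ w, (simplex (n + 1) x).indicator
      (fun v => ∏ l : Fin (n + 1), f l (v l)) (Fin.snoc w y) =
      f n y * (simplex n y).indicator (fun v => ∏ l : Fin n, f l (v l)) w := by
    intro y hy w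
    by_cases hw : w ∈ simplex n y
    · rw [indicator_of_mem (snoc_mem_simplex_iff.2 ⟨hy, hw⟩), indicator_of_mem hw,
        Fin.prod_univ_castSucc]
      simp [mul_comm]
    · rw [indicator_of_notMem (fun h => hw (snoc_mem_simplex_iff.1 h).2), indicator_of_notMem hw,
        mul_zero]
  have hinner : ∀ y, ∫ w : Fin n → ℝ, (simplex (n + 1) x).indicator
      (fun v => ∏ l : Fin (n + 1), f l (v l)) (Fin.snoc w y) =
      (Icc 0 x).indicator (fun y => f n y * simplexIntegral f n y) y := by
    intro y
    by_cases hy : y ∈ Icc 0 x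
    · simp only [indicator_of_mem hy, hsnoc y hy, simplexIntegral, integral_const_mul]
    · simp only [indicator_of_notMem hy,
        indicator_of_notMem fun h => hy (snoc_mem_simplex_iff.1 h).1, integral_zero]
  rw [simplexIntegral, integral_fin_succ_eq_integral_snoc (integrable_indicator_simplex hf _ _)]
  simp only [hinner, integral_indicator measurableSet_Icc, intervalIntegral.integral_of_le hx,
    integral_Icc_eq_integral_Ioc]

theorem continuousOn_simplexIntegral (hf : ∀ l, ContinuousOn (f l) (Ici 0)) (n : ℕ) :
    ContinuousOn (simplexIntegral f n) (Ici 0) := by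
  induction n with
  | zero => exact continuousOn_const.congr fun x _ => simplexIntegral_zero f x
  | succ n ih =>
    intro x hx
    exact (((hf n).mul ih).hasDerivWithinAt_integral_Ici hx).continuousWithinAt.congr
      (fun y hy => simplexIntegral_succ hf n hy) (simplexIntegral_succ hf n hx)

end

theorem G_nonneg : ∀ (j : ℕ) {x : ℝ}, 0 ≤ x → 0 ≤ G j x
  | 0, _, _ | 1, _, _ | 2, _, _ => le_rfl
  | j + 3, _, hx => intervalIntegral.integral_nonneg hx fun _ hy => by
      have := G_nonneg (j + 2) hy.1
      positivity

theorem one_le_one_add_G (j : ℕ) {x : ℝ} (hx : 0 ≤ x) : 1 ≤ 1 + G j x :=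
  le_add_of_nonneg_right (G_nonneg j hx)

theorem one_add_G_pos (j : ℕ) {x : ℝ} (hx : 0 ≤ x) : 0 < 1 + G j x :=
  zero_lt_one.trans_le (one_le_one_add_G j hx)

theorem continuousOn_G : ∀ j, ContinuousOn (G j) (Ici 0)
  | 0 | 1 | 2 => continuousOn_const
  | j + 3 => fun _ hx =>
    ((continuousOn_const.div (continuousOn_const.add (continuousOn_G (j + 2))) fun _ hy =>
      (one_add_G_pos (j + 2) hy).ne').hasDerivWithinAt_integral_Ici
        hx).continuousWithinAt

theorem continuousOn_inv_one_add_G (j : ℕ) :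
    ContinuousOn (fun y => (1 + G j y)⁻¹) (Ici 0) :=
  (continuousOn_const.add (continuousOn_G j)).inv₀ fun _ hy => (one_add_G_pos j hy).ne'

theorem G_add_three (j : ℕ) (x : ℝ) : G (j + 3) x = ∫ y in (0 : ℝ)..x, (1 + G (j + 2) y)⁻¹ := by
  simp only [G, one_div]

theorem hasDerivWithinAt_G (j : ℕ) {x : ℝ} (hx : 0 ≤ x) :
    HasDerivWithinAt (G (j + 3)) (1 + G (j + 2) x)⁻¹ (Ici 0) x := by
  simpa only [funext (G_add_three j)] using
    (continuousOn_inv_one_add_G (j + 2)).hasDerivWithinAt_integral_Ici hx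

theorem Gplus_eq_simplexIntegral (m : ℕ) :
    Gplus m = simplexIntegral fun l y => ((1 + G (m + l) y) ^ 2)⁻¹ :=
  rfl

theorem continuousOn_inv_one_add_G_sq (j : ℕ) :
    ContinuousOn (fun y => ((1 + G j y) ^ 2)⁻¹) (Ici 0) :=
  ((continuousOn_const.add (continuousOn_G j)).pow 2).inv₀ fun _ hy =>
    pow_ne_zero 2 (one_add_G_pos j hy).ne'

theorem Gplus_succ (m i : ℕ) {x : ℝ} (hx : 0 ≤ x) :
    Gplus m (i + 1) x = ∫ y in (0 : ℝ)..x, ((1 + G (m + i) y) ^ 2)⁻¹ * Gplus m i y := by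
  simp only [Gplus_eq_simplexIntegral]
  exact simplexIntegral_succ (fun l => continuousOn_inv_one_add_G_sq (m + l)) i hx

theorem continuousOn_Gplus (m i : ℕ) : ContinuousOn (Gplus m i) (Ici 0) := by
  rw [Gplus_eq_simplexIntegral]
  exact continuousOn_simplexIntegral (fun l => continuousOn_inv_one_add_G_sq (m + l)) i

theorem S_eq_sum_range (n : ℕ) (x : ℝ) : S n x = ∑ i ∈ Finset.range n, Gplus (n + 1 - i) i x := by
  rw [S, ← Finset.Ico_add_one_right_eq_Icc, Finset.sum_Ico_eq_sum_range, Nat.add_sub_cancel]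
  refine Finset.sum_congr rfl fun i _ => ?_
  congr 1 <;> omega

theorem S_succ (n : ℕ) {x : ℝ} (hx : 0 ≤ x) : S (n + 1) x = 1 + G (n + 2) x := by
  induction n generalizing x with
  | zero => simp [S_eq_sum_range, Gplus_eq_simplexIntegral, G]
  | succ n ih =>
    have hterm : ∀ i ∈ Finset.range (n + 1), Gplus (n + 2 + 1 - (i + 1)) (i + 1) x =
        ∫ y in (0 : ℝ)..x, ((1 + G (n + 2) y) ^ 2)⁻¹ * Gplus (n + 2 - i) i y := by
      intro i hi
      rw [show n + 2 + 1 - (i + 1) = n + 2 - i by omega, Gplus_succ _ _ hx,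
        show n + 2 - i + i = n + 2 by simp at hi; omega]
    have hint : ∀ i ∈ Finset.range (n + 1), IntervalIntegrable
        (fun y => ((1 + G (n + 2) y) ^ 2)⁻¹ * Gplus (n + 2 - i) i y) volume 0 x := fun i _ =>
      ((continuousOn_inv_one_add_G_sq _).mul (continuousOn_Gplus _ i)).mono
        Icc_subset_Ici_self |>.intervalIntegrable_of_Icc hx
    have hintegrand : EqOn (fun y => ∑ i ∈ Finset.range (n + 1),
        ((1 + G (n + 2) y) ^ 2)⁻¹ * Gplus (n + 2 - i) i y) (fun y => (1 + G (n + 2) y)⁻¹)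
        (uIcc 0 x) := fun y hy => by
      rw [uIcc_of_le hx] at hy
      have := (one_add_G_pos (n + 2) hy.1).ne'
      simp only [← Finset.mul_sum, ← S_eq_sum_range (n + 1), ih hy.1]
      field_simp
    rw [S_eq_sum_range, Finset.sum_range_succ', Finset.sum_congr rfl hterm,
      ← intervalIntegral.integral_finsetSum hint, intervalIntegral.integral_congr hintegrand,
      ← G_add_three, Gplus_eq_simplexIntegral, simplexIntegral_zero, add_comm]

theorem derivWithin_S (n : ℕ) {x : ℝ} (hx : 0 ≤ x) :
    derivWithin (S (n + 2)) (Ici 0) x = (1 + G (n + 2) x)⁻¹ :=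
  (((hasDerivWithinAt_G n hx).const_add 1).congr (fun _ hy => S_succ (n + 1) hy)
    (S_succ (n + 1) hx)).derivWithin (uniqueDiffOn_Ici 0 x hx)

theorem abs_one_add_G_sub_sqrt_le (k : ℕ) {x : ℝ} (hx : 0 ≤ x) :
    |1 + G (k + 2) x - √(2 * x + 1)| ≤ x ^ (k + 1) / (k + 1)! := by
  induction k generalizing x with
  | zero =>
    have hlow : 1 ≤ √(2 * x + 1) := Real.one_le_sqrt.2 (by linarith)
    have hup : √(2 * x + 1) ≤ x + 1 := Real.sqrt_le_iff.2 ⟨by linarith, by nlinarith⟩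
    rw [show G 2 x = 0 from rfl, zero_add, pow_one, Nat.factorial_one, Nat.cast_one, div_one,
      add_zero, abs_le]
    constructor <;> linarith
  | succ k ih =>
    have hsqrt : ContinuousOn (fun y => (√(2 * y + 1))⁻¹) (Icc 0 x) :=
      ContinuousOn.inv₀ (by fun_prop) fun y hy => (Real.sqrt_pos.2 (by linarith [hy.1])).ne'
    have hrepr : 1 + G (k + 3) x - √(2 * x + 1) =
        ∫ y in (0 : ℝ)..x, ((1 + G (k + 2) y)⁻¹ - (√(2 * y + 1))⁻¹) := by
      rw [intervalIntegral.integral_sub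
        ((continuousOn_inv_one_add_G _).mono Icc_subset_Ici_self |>.intervalIntegrable_of_Icc hx)
        (hsqrt.intervalIntegrable_of_Icc hx),
        ← sqrt_two_mul_add_one_sub_one_eq_integral (by linarith), ← G_add_three]
      ring
    have hstep : ∀ y ∈ Ioc 0 x, ‖(1 + G (k + 2) y)⁻¹ - (√(2 * y + 1))⁻¹‖ ≤ y ^ (k + 1) / (k + 1)! :=
      fun y hy => (abs_inv_sub_inv_le_abs_sub (one_le_one_add_G _ hy.1.le)
        (Real.one_le_sqrt.2 (by linarith [hy.1]))).trans (ih hy.1.le)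
    calc |1 + G (k + 1 + 2) x - √(2 * x + 1)|
        ≤ ∫ y in (0 : ℝ)..x, y ^ (k + 1) / (k + 1)! := by
          rw [hrepr]
          exact intervalIntegral.norm_integral_le_of_norm_le hx (ae_of_all _ hstep)
            (((continuous_pow _).div_const _).intervalIntegrable _ _)
      _ = x ^ (k + 1 + 1) / (k + 1 + 1)! := by
          rw [intervalIntegral.integral_div, integral_pow, Nat.factorial_succ (k + 1)]
          push_cast
          rw [zero_pow (by omega), sub_zero, div_div]

theorem tendstoUniformlyOn_S (R : ℝ) :
    TendstoUniformlyOn (fun n x => S n x) (fun x => √(2 * x + 1)) atTop (Icc 0 R) := by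
  refine tendstoUniformlyOn_of_dist_le (FloorSemiring.tendsto_pow_div_factorial_atTop R) ?_
  filter_upwards [eventually_ge_atTop 1] with n hn x hx
  obtain ⟨k, rfl⟩ := Nat.exists_eq_add_of_le' hn
  rw [Real.dist_eq, abs_sub_comm, S_succ k hx.1]
  exact (abs_one_add_G_sub_sqrt_le k hx.1).trans (by gcongr; exacts [hx.1, hx.2])

theorem tendstoUniformlyOn_derivWithin_S (R : ℝ) :
    TendstoUniformlyOn (fun n x => derivWithin (S n) (Ici 0) x) (fun x => 1 / √(2 * x + 1))
      atTop (Icc 0 R) := by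
  refine tendstoUniformlyOn_of_dist_le
    ((FloorSemiring.tendsto_pow_div_factorial_atTop R).comp (tendsto_sub_atTop_nat 1)) ?_
  filter_upwards [eventually_ge_atTop 2] with n hn x hx
  obtain ⟨k, rfl⟩ := Nat.exists_eq_add_of_le' hn
  rw [Real.dist_eq, abs_sub_comm, derivWithin_S k hx.1, one_div]
  calc |(1 + G (k + 2) x)⁻¹ - (√(2 * x + 1))⁻¹|
      ≤ |1 + G (k + 2) x - √(2 * x + 1)| :=
        abs_inv_sub_inv_le_abs_sub (one_le_one_add_G _ hx.1)
          (Real.one_le_sqrt.2 (by linarith [hx.1]))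
    _ ≤ x ^ (k + 1) / (k + 1)! := abs_one_add_G_sub_sqrt_le k hx.1
    _ ≤ R ^ (k + 1) / (k + 1)! := by gcongr; exacts [hx.1, hx.2]

theorem stmt7_general (R : ℝ) :
    TendstoUniformlyOn (fun n x => S n x) (fun x => Real.sqrt (2 * x + 1))
      Filter.atTop (Set.Icc 0 R) ∧
    TendstoUniformlyOn (fun n x => derivWithin (S n) (Set.Ici 0) x)
      (fun x => 1 / Real.sqrt (2 * x + 1)) Filter.atTop (Set.Icc 0 R) ∧
    (∀ c : ℝ, 0 ≤ c →
      Filter.Tendsto (fun n => S n c) Filter.atTop (nhds (Real.sqrt (2 * c + 1)))) :=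
  ⟨tendstoUniformlyOn_S R, tendstoUniformlyOn_derivWithin_S R,
    fun c hc => (tendstoUniformlyOn_S c).tendsto_at ⟨hc, le_rfl⟩⟩

theorem stmt7 (R : ℝ) (hR : 0 < R) :
    TendstoUniformlyOn (fun n x => S n x) (fun x => Real.sqrt (2 * x + 1))
      Filter.atTop (Set.Icc 0 R) ∧
    TendstoUniformlyOn (fun n x => derivWithin (S n) (Set.Ici 0) x)
      (fun x => 1 / Real.sqrt (2 * x + 1)) Filter.atTop (Set.Icc 0 R) ∧
    (∀ c : ℝ, 0 ≤ c →
      Filter.Tendsto (fun n => S n c) Filter.atTop (nhds (Real.sqrt (2 * c + 1)))) :=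
  stmt7_general R
end

section
/- There is a universal constant C such that for every integer N ≥ 2, every k ∈ ℤ², every μ ≥ 0 and every s ≥ 0, Σ_{ℓ,m ∈ ℤ²∖{0}, ℓ+m = k} (𝒦^N_{ℓ,m})² / (μ + ½(|ℓ|² + |m|² + s)) ≤ C·log N. -/
/-- Embedding of the lattice `ℤ²` into `ℝ²`. -/
def latR (l : ℤ × ℤ) : ℝ × ℝ := ((l.1 : ℝ), (l.2 : ℝ))

/-- Squared Euclidean norm `|ℓ|²` of a lattice point. -/
noncomputable def nsq (l : ℤ × ℤ) : ℝ := (l.1 : ℝ) ^ 2 + (l.2 : ℝ) ^ 2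

/-- Squared Euclidean norm `|x|²` on `ℝ²`. -/
noncomputable def rnsq (x : ℝ × ℝ) : ℝ := x.1 ^ 2 + x.2 ^ 2

/-- `c(x,y) = x₂ y₂ − x₁ y₁`. -/
noncomputable def cfun (x y : ℝ × ℝ) : ℝ := x.2 * y.2 - x.1 * y.1

open Classical in
/-- The kernel `𝒦^N_{x,y} = (1/2π) · c(x,y)/(|x||y|) · 1_{1 ≤ |x| ≤ N, 1 ≤ |y| ≤ N, |x+y| ≤ N}`,
with the convention that it vanishes if `x = 0` or `y = 0`. -/
noncomputable def Kker (N : ℕ) (x y : ℝ × ℝ) : ℝ :=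
  if x ≠ 0 ∧ y ≠ 0 ∧ 1 ≤ Real.sqrt (rnsq x) ∧ Real.sqrt (rnsq x) ≤ N ∧
      1 ≤ Real.sqrt (rnsq y) ∧ Real.sqrt (rnsq y) ≤ N ∧ Real.sqrt (rnsq (x + y)) ≤ N then
    (1 / (2 * Real.pi)) * (cfun x y / (Real.sqrt (rnsq x) * Real.sqrt (rnsq y)))
  else 0

/-!
The kernel is bounded by `1`, since `|c(x,y)| ≤ |x||y|` by Cauchy–Schwarz, and it vanishes unless
`1 ≤ |ℓ| ≤ N`; the denominator is at least `|ℓ|²/2`. Grouping the lattice points with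
`1 ≤ |ℓ|_∞ ≤ N` into the square shells `|ℓ|_∞ = j` (`Finset.box j`, with `8j` points, each with
`|ℓ|² ≥ j²`), the sum is at most `16 ∑_{j ≤ N} 1/j ≤ 16 (1 + log N) ≤ 48 log N`.
-/

open Finset

lemma nsq_nonneg (ℓ : ℤ × ℤ) : 0 ≤ nsq ℓ := by unfold nsq; positivity

lemma abs_cfun_le (x y : ℝ × ℝ) : |cfun x y| ≤ √(rnsq x) * √(rnsq y) := by
  rw [← Real.sqrt_mul (by unfold rnsq; positivity)]
  refine Real.abs_le_sqrt ?_
  unfold cfun rnsq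
  nlinarith [sq_nonneg (x.1 * y.2 + x.2 * y.1)]

lemma Kker_sq_le_one (N : ℕ) (x y : ℝ × ℝ) : Kker N x y ^ 2 ≤ 1 := by
  unfold Kker
  split_ifs with h
  · obtain ⟨-, -, hx, -, hy, -, -⟩ := h
    have hxy : 0 < √(rnsq x) * √(rnsq y) := by nlinarith
    have hc : |cfun x y / (√(rnsq x) * √(rnsq y))| ≤ 1 := by
      rw [abs_div, abs_of_pos hxy]
      exact div_le_one_of_le₀ (abs_cfun_le x y) hxy.le
    have hpi : |1 / (2 * Real.pi)| ≤ 1 := by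
      rw [abs_of_pos (by positivity), div_le_one (by positivity)]
      linarith [Real.pi_gt_three]
    rw [sq_le_one_iff_abs_le_one, abs_mul]
    exact mul_le_one₀ hpi (abs_nonneg _) hc
  · norm_num

lemma one_le_sqrt_rnsq_le_of_Kker_ne_zero {N : ℕ} {x y : ℝ × ℝ} (h : Kker N x y ≠ 0) :
    1 ≤ √(rnsq x) ∧ √(rnsq x) ≤ N := by
  unfold Kker at h
  split_ifs at h with hc
  · exact ⟨hc.2.2.1, hc.2.2.2.1⟩
  · exact absurd rfl h

lemma sq_le_nsq_of_mem_box {j : ℕ} {ℓ : ℤ × ℤ} (h : ℓ ∈ box j) : (j : ℝ) ^ 2 ≤ nsq ℓ := by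
  rw [Int.mem_box] at h
  subst h
  unfold nsq
  rcases max_cases ℓ.1.natAbs ℓ.2.natAbs with ⟨h, -⟩ | ⟨h, -⟩ <;>
    simp only [h, Nat.cast_natAbs, Int.cast_abs, sq_abs] <;>
    nlinarith [sq_nonneg (ℓ.1 : ℝ), sq_nonneg (ℓ.2 : ℝ)]

lemma mem_biUnion_box_of_one_le_nsq_le_sq {N : ℕ} {ℓ : ℤ × ℤ} (h1 : 1 ≤ nsq ℓ) (hN : nsq ℓ ≤ N ^ 2) :
    ℓ ∈ (Icc 1 N).biUnion box := by
  set j := max ℓ.1.natAbs ℓ.2.natAbs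
  have hℓ : ℓ ∈ box j := Int.mem_box.2 rfl
  have hj := sq_le_nsq_of_mem_box hℓ
  refine mem_biUnion.2 ⟨j, mem_Icc.2 ⟨Nat.one_le_iff_ne_zero.2 fun hj0 => ?_, ?_⟩, hℓ⟩
  · rw [hj0, box_zero, mem_singleton] at hℓ
    norm_num [hℓ, nsq] at h1
  · exact_mod_cast
      (pow_le_pow_iff_left₀ (by positivity) (by positivity) two_ne_zero).1 (hj.trans hN)

lemma sum_box_inv_nsq_le {j : ℕ} (hj : j ≠ 0) : ∑ ℓ ∈ box j, (nsq ℓ)⁻¹ ≤ 8 / j := by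
  have hjpos : (0 : ℝ) < j := by positivity
  calc ∑ ℓ ∈ box j, (nsq ℓ)⁻¹ ≤ #(box j : Finset (ℤ × ℤ)) • ((j : ℝ) ^ 2)⁻¹ :=
        sum_le_card_nsmul _ _ _ fun ℓ hℓ => inv_anti₀ (by positivity) (sq_le_nsq_of_mem_box hℓ)
    _ = 8 / j := by
        rw [Int.card_box hj, nsmul_eq_mul]
        field_simp
        push_cast
        ring

lemma sum_biUnion_box_inv_nsq_le (N : ℕ) :
    ∑ ℓ ∈ (Icc 1 N).biUnion box, (nsq ℓ)⁻¹ ≤ 8 * harmonic N := by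
  rw [sum_biUnion fun _ _ _ _ hij => disjoint_disjointed _ hij, harmonic_eq_sum_Icc]
  push_cast
  rw [mul_sum]
  refine sum_le_sum fun j hj => ?_
  rw [← div_eq_mul_inv]
  exact sum_box_inv_nsq_le (Nat.one_le_iff_ne_zero.1 (mem_Icc.1 hj).1)

lemma mem_biUnion_box_of_Kker_ne_zero {N : ℕ} {ℓ : ℤ × ℤ} {y : ℝ × ℝ}
    (h : Kker N (latR ℓ) y ≠ 0) : ℓ ∈ (Icc 1 N).biUnion box := by
  obtain ⟨h1, hN⟩ := one_le_sqrt_rnsq_le_of_Kker_ne_zero h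
  exact mem_biUnion_box_of_one_le_nsq_le_sq (Real.one_le_sqrt.1 h1)
    ((Real.sqrt_le_left (Nat.cast_nonneg N)).1 hN)

lemma Kker_sq_div_le (N : ℕ) (x y : ℝ × ℝ) {μ a b s : ℝ} (hμ : 0 ≤ μ) (ha : 0 < a) (hb : 0 ≤ b)
    (hs : 0 ≤ s) : Kker N x y ^ 2 / (μ + (a + b + s) / 2) ≤ 2 * a⁻¹ :=
  calc Kker N x y ^ 2 / (μ + (a + b + s) / 2) ≤ 1 / (a / 2) :=
        div_le_div₀ zero_le_one (Kker_sq_le_one N x y) (by positivity) (by linarith)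
    _ = 2 * a⁻¹ := by ring

theorem stmt15 :
    ∃ C : ℝ, ∀ N : ℕ, 2 ≤ N → ∀ k : ℤ × ℤ, ∀ μ : ℝ, 0 ≤ μ → ∀ s : ℝ, 0 ≤ s →
      (∑' ℓ : ℤ × ℤ,
          (Kker N (latR ℓ) (latR (k - ℓ))) ^ 2 / (μ + (nsq ℓ + nsq (k - ℓ) + s) / 2)) ≤
        C * Real.log N := by
  refine ⟨48, fun N hN k μ hμ s hs => ?_⟩
  set S : Finset (ℤ × ℤ) := (Icc 1 N).biUnion box
  have hsupp : ∀ ℓ ∉ S,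
      Kker N (latR ℓ) (latR (k - ℓ)) ^ 2 / (μ + (nsq ℓ + nsq (k - ℓ) + s) / 2) = 0 :=
    fun ℓ hℓ => by rw [not_imp_comm.1 mem_biUnion_box_of_Kker_ne_zero hℓ]; simp
  have hpos : ∀ ℓ ∈ S, 0 < nsq ℓ := fun ℓ hℓ => by
    obtain ⟨j, hj, hℓj⟩ := mem_biUnion.1 hℓ
    have : (1 : ℝ) ≤ j := by exact_mod_cast (mem_Icc.1 hj).1
    nlinarith [sq_le_nsq_of_mem_box hℓj]
  have hlog : 1 / 2 ≤ Real.log N := by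
    have : Real.log 2 ≤ Real.log N := Real.log_le_log two_pos (by exact_mod_cast hN)
    linarith [Real.log_two_gt_d9]
  calc _ = ∑ ℓ ∈ S, Kker N (latR ℓ) (latR (k - ℓ)) ^ 2 / (μ + (nsq ℓ + nsq (k - ℓ) + s) / 2) :=
        tsum_eq_sum hsupp
    _ ≤ ∑ ℓ ∈ S, 2 * (nsq ℓ)⁻¹ :=
        sum_le_sum fun ℓ hℓ => Kker_sq_div_le N _ _ hμ (hpos ℓ hℓ) (nsq_nonneg _) hs
    _ ≤ 2 * (8 * harmonic N) := by
        rw [← mul_sum]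
        gcongr
        exact sum_biUnion_box_inv_nsq_le N
    _ ≤ 16 * (1 + Real.log N) := by linarith [harmonic_le_one_add_log N]
    _ ≤ 48 * Real.log N := by linarith
end
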